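/- Let f : E^r → ℚ be a GP-function and a₁ ∈ E a fixed element. Then the function g : E^{r−1} → ℚ defined by g(x₂,…,x_r) = f(a₁,x₂,…,x_r) is a GP-function of rank r−1: it is alternating and satisfies ∑_{i=0}^{r−1} (−1)^i g(y_i,x₂,…,x_{r−1})·g(y₀,…,ŷ_i,…,y_{r−1}) = 0. -/
import Mathlib


open Finset

/-- An alternating function: applying a permutation multiplies the value by its sign. -/
def IsAlt {E : Type*} {r : ℕ} (f : (Fin r → E) → ℚ) : Prop :=
  ∀ (σ : Equiv.Perm (Fin r)) (x : Fin r → E),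
    f (x ∘ σ) = ((Equiv.Perm.sign σ : ℤ) : ℚ) * f x

/-- The Grassmann–Plücker relation for a function of rank `r + 1`. -/
def IsGP {E : Type*} {r : ℕ} (f : (Fin (r + 1) → E) → ℚ) : Prop :=
  ∀ (x : Fin r → E) (y : Fin (r + 2) → E),
    ∑ i : Fin (r + 2), (-1 : ℚ) ^ (i : ℕ) * f (Fin.cons (y i) x) * f (y ∘ i.succAbove) = 0

lemma alt_eq_zero {E : Type*} {n : ℕ} {f : (Fin n → E) → ℚ} (h : IsAlt f)
    {x : Fin n → E} {i j : Fin n} (hij : i ≠ j) (hx : x i = x j) : f x = 0 := by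
  have hk : x ∘ Equiv.swap i j = x := by
    funext k
    rcases eq_or_ne k i with rfl | hki
    · simp [Equiv.swap_apply_left, hx]
    rcases eq_or_ne k j with rfl | hkj
    · simp [Equiv.swap_apply_right, hx]
    · simp [Equiv.swap_apply_of_ne_of_ne hki hkj]
  have := h (Equiv.swap i j) x
  rw [hk, Equiv.Perm.sign_swap hij] at this
  push_cast at this
  linarith

lemma alt_swap01 {E : Type*} {n : ℕ} {f : (Fin (n + 2) → E) → ℚ} (h : IsAlt f)
    (a b : E) (x : Fin n → E) :
    f (Fin.cons b (Fin.cons a x)) = - f (Fin.cons a (Fin.cons b x)) := by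
  have hk : (Fin.cons a (Fin.cons b x) : Fin (n + 2) → E) ∘ Equiv.swap 0 1
      = Fin.cons b (Fin.cons a x) := by
    funext k
    refine Fin.cases ?_ (fun k => ?_) k
    · simp [Equiv.swap_apply_left]
    refine Fin.cases ?_ (fun k => ?_) k
    · have : Equiv.swap (0 : Fin (n + 2)) 1 1 = 0 := Equiv.swap_apply_right 0 1
      simp [this]
    · have h1 : (k.succ.succ : Fin (n + 2)) ≠ 0 := Fin.succ_ne_zero _
      have h2 : (k.succ.succ : Fin (n + 2)) ≠ 1 := by
        simp [Fin.ext_iff, Fin.val_succ]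
      simp [Equiv.swap_apply_of_ne_of_ne h1 h2]
  have := h (Equiv.swap 0 1) (Fin.cons a (Fin.cons b x))
  rw [hk, Equiv.Perm.sign_swap (by simp)] at this
  push_cast at this
  linarith

/-- Fixing the first argument of a GP-function of rank `r + 2` yields a GP-function
of rank `r + 1` (contraction). -/
theorem GP_contraction {E : Type*} {r : ℕ} (f : (Fin (r + 2) → E) → ℚ)
    (halt : IsAlt f) (hGP : IsGP (r := r + 1) f) (a₁ : E) :
    IsAlt (fun x : Fin (r + 1) → E => f (Fin.cons a₁ x)) ∧
    IsGP (fun x : Fin (r + 1) → E => f (Fin.cons a₁ x)) := by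
  constructor
  · intro σ x
    have key : (Fin.cons a₁ x : Fin (r + 2) → E) ∘ (Equiv.Perm.decomposeFin.symm (0, σ))
        = Fin.cons a₁ (x ∘ σ) := by
      funext j
      refine Fin.cases ?_ (fun j => ?_) j
      · simp
      · simp [Equiv.Perm.decomposeFin_symm_apply_succ]
    have h := halt (Equiv.Perm.decomposeFin.symm (0, σ)) (Fin.cons a₁ x)
    rw [key, Equiv.Perm.decomposeFin.symm_sign] at h
    simpa using h
  · intro x y
    have h := hGP (Fin.cons a₁ x) (Fin.cons a₁ y)
    rw [Fin.sum_univ_succ] at h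
    simp only [Fin.cons_zero] at h
    have h0 : f (Fin.cons a₁ (Fin.cons a₁ x)) = 0 := by
      have hx : (Fin.cons a₁ (Fin.cons a₁ x) : Fin (r + 2) → E) 0
          = (Fin.cons a₁ (Fin.cons a₁ x) : Fin (r + 2) → E) 1 := by
        show a₁ = (Fin.cons a₁ (Fin.cons a₁ x) : Fin (r + 2) → E) (0 : Fin (r+1)).succ
        simp
      exact alt_eq_zero halt (i := 0) (j := 1) (by simp) hx
    rw [h0] at h
    simp only [mul_zero, zero_mul, zero_add] at h
    have heq : ∀ i : Fin (r + 2),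
        (-1 : ℚ) ^ ((i.succ : Fin (r + 3)) : ℕ) *
          f (Fin.cons ((Fin.cons a₁ y : Fin (r + 3) → E) i.succ) (Fin.cons a₁ x)) *
          f ((Fin.cons a₁ y : Fin (r + 3) → E) ∘ (i.succ).succAbove)
        = (-1 : ℚ) ^ (i : ℕ) * f (Fin.cons a₁ (Fin.cons (y i) x)) *
          f (Fin.cons a₁ (y ∘ i.succAbove)) := by
      intro i
      have hc : (Fin.cons a₁ y : Fin (r + 3) → E) ∘ (i.succ).succAbove
          = Fin.cons a₁ (y ∘ i.succAbove) := by
        funext j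
        refine Fin.cases ?_ (fun j => ?_) j
        · simp [Fin.succ_succAbove_zero]
        · simp [Fin.succ_succAbove_succ]
      rw [hc, Fin.cons_succ, alt_swap01 halt]
      push_cast [Fin.val_succ, pow_succ]
      ring
    rw [Finset.sum_congr rfl (fun i _ => heq i)] at h
    simpa using h
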